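/- arXiv:1802.10331 — 5 statements merged into one kernel-verified Lean document; each statement's English description precedes it below -/
import Mathlib

section
/- Let G = (V,E) be a connected chordal claw-free graph with clique tree T_G, let u, w ∈ V, and let B be a max clique of G. If the paths T_G[M_u] and T_G[M_w] fork in B, then B has a fork triangle. -/
open SimpleGraph

/-- A graph is *chordal* if every cycle of length at least 4 has a chord, i.e. an
edge of the graph joining two vertices of the cycle that is not an edge of the cycle. -/
def IsChordal {V : Type*} (G : SimpleGraph V) : Prop :=
  ∀ (v : V) (c : G.Walk v v), c.IsCycle → 4 ≤ c.length →
    ∃ u w : V, u ∈ c.support ∧ w ∈ c.support ∧ G.Adj u w ∧ s(u, w) ∉ c.edges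

/-- A graph is *claw-free* if it has no induced subgraph isomorphic to the
complete bipartite graph `K_{1,3}`. -/
def ClawFree {V : Type*} (G : SimpleGraph V) : Prop :=
  IsEmpty (completeBipartiteGraph (Fin 1) (Fin 3) ↪g G)

/-- A *max clique* of `G` is a maximal clique. -/
def IsMaximalClique {V : Type*} (G : SimpleGraph V) (s : Set V) : Prop :=
  G.IsClique s ∧ ∀ t : Set V, G.IsClique t → s ⊆ t → s = t

/-- The type of max cliques of `G`. -/
abbrev MaxClique {V : Type*} (G : SimpleGraph V) : Type _ :=
  {s : Set V // IsMaximalClique G s}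

/-- `M_v`: the set of max cliques of `G` containing the vertex `v`. -/
def cliquesOf {V : Type*} (G : SimpleGraph V) (v : V) : Set (MaxClique G) :=
  {A | v ∈ A.1}

/-- A *clique tree* of `G`: a tree whose vertices are the max cliques of `G` such
that for every vertex `v` of `G` the subgraph induced by `M_v` is connected. -/
structure IsCliqueTree {V : Type*} (G : SimpleGraph V)
    (T : SimpleGraph (MaxClique G)) : Prop where
  isTree : T.IsTree
  induced_connected : ∀ v : V, (T.induce (cliquesOf G v)).Connected

/-- The subgraph of `T` induced by `S` is a path in `T`: there is a path of `T`
whose vertices are exactly `S` and whose edges are exactly the edges of `T`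
between vertices of `S`. -/
def InducedPath {M : Type*} (T : SimpleGraph M) (S : Set M) : Prop :=
  ∃ (a b : M) (p : T.Walk a b), p.IsPath ∧ (∀ A, A ∈ p.support ↔ A ∈ S) ∧
    ∀ A B, A ∈ S → B ∈ S → (T.Adj A B ↔ s(A, B) ∈ p.edges)

/-- `B` is a *star clique*: every vertex of `B` is contained in at most one
neighbor of `B` in the clique tree `T`. -/
def IsStarClique {V : Type*} (G : SimpleGraph V) (T : SimpleGraph (MaxClique G))
    (B : MaxClique G) : Prop :=
  ∀ v ∈ B.1, ∀ A A' : MaxClique G, T.Adj B A → T.Adj B A' →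
    v ∈ A.1 → v ∈ A'.1 → A = A'

/-- `B` is a *fork clique*: `B` has degree 3 in the clique tree `T`, for every
vertex `v ∈ B` there are two distinct neighbors `A, A'` of `B` with
`M_v = {B, A, A'}`, and for all distinct neighbors `A, A'` of `B` there is a
vertex `v` with `M_v = {B, A, A'}`. -/
def IsForkClique {V : Type*} (G : SimpleGraph V) (T : SimpleGraph (MaxClique G))
    (B : MaxClique G) : Prop :=
  (T.neighborSet B).ncard = 3 ∧
  (∀ v ∈ B.1, ∃ A A' : MaxClique G, A ≠ A' ∧ T.Adj B A ∧ T.Adj B A' ∧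
      cliquesOf G v = {B, A, A'}) ∧
  ∀ A A' : MaxClique G, T.Adj B A → T.Adj B A' → A ≠ A' →
      ∃ v : V, cliquesOf G v = {B, A, A'}

/-- The paths `T[S₁]` and `T[S₂]` *fork in `A`*: there is a fork
`(A', A, {A_P, A_Q})`, i.e. `A', A, A_P` are consecutive vertices of the path
`T[S₁]`, `A', A, A_Q` are consecutive vertices of the path `T[S₂]`,
`A_P` does not occur in `T[S₂]` and `A_Q` does not occur in `T[S₁]`. -/
def ForkAt {M : Type*} (T : SimpleGraph M) (S₁ S₂ : Set M) (A : M) : Prop :=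
  ∃ A' AP AQ : M, A' ∈ S₁ ∧ A' ∈ S₂ ∧ A ∈ S₁ ∧ A ∈ S₂ ∧ AP ∈ S₁ ∧ AQ ∈ S₂ ∧
    T.Adj A' A ∧ T.Adj A AP ∧ T.Adj A AQ ∧ A' ≠ AP ∧ A' ≠ AQ ∧ AP ∉ S₂ ∧ AQ ∉ S₁

/-- `A₁, A₂, A₃` form a *fork triangle* around `B`. -/
def FormsForkTriangle {V : Type*} (G : SimpleGraph V) (T : SimpleGraph (MaxClique G))
    (A₁ A₂ A₃ B : MaxClique G) : Prop :=
  A₁ ≠ A₂ ∧ A₁ ≠ A₃ ∧ A₂ ≠ A₃ ∧ T.Adj B A₁ ∧ T.Adj B A₂ ∧ T.Adj B A₃ ∧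
  (∃ u : V, cliquesOf G u = {A₁, B, A₂}) ∧
  (∃ v : V, cliquesOf G v = {A₂, B, A₃}) ∧
  (∃ w : V, cliquesOf G w = {A₃, B, A₁})

/-- `B` has a fork triangle. -/
def HasForkTriangle {V : Type*} (G : SimpleGraph V) (T : SimpleGraph (MaxClique G))
    (B : MaxClique G) : Prop :=
  ∃ A₁ A₂ A₃ : MaxClique G, FormsForkTriangle G T A₁ A₂ A₃ B

/-- In the tree `T` rooted at `R`, `B` is an ancestor of `A` (equivalently, `A` is
a descendant of `B`): `B` lies on the unique path from `R` to `A`.  Every vertex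
is an ancestor/descendant of itself. -/
def IsAncestor {M : Type*} (T : SimpleGraph M) (R A B : M) : Prop :=
  ∀ p : T.Walk R A, p.IsPath → B ∈ p.support

/-- In the tree `T` rooted at `R`, `A` is a child of `P`. -/
def IsChildOf {M : Type*} (T : SimpleGraph M) (R A P : M) : Prop :=
  T.Adj P A ∧ IsAncestor T R A P

/-- `R` is a leaf of `T`: it has exactly one neighbor. -/
def IsLeaf {M : Type*} (T : SimpleGraph M) (R : M) : Prop :=
  (T.neighborSet R).ncard = 1

/-- The triple `(v₁, v₂, v₃)` *spans* the max clique `A`: `A` is the only max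
clique of `G` containing `v₁`, `v₂` and `v₃`. -/
def Spans {V : Type*} (G : SimpleGraph V) (v₁ v₂ v₃ : V) (A : Set V) : Prop :=
  IsMaximalClique G A ∧ v₁ ∈ A ∧ v₂ ∈ A ∧ v₃ ∈ A ∧
    ∀ B : Set V, IsMaximalClique G B → v₁ ∈ B → v₂ ∈ B → v₃ ∈ B → B = A

set_option linter.unusedSectionVars false
section Aux

open SimpleGraph Walk

variable {V : Type*} [Fintype V] {G : SimpleGraph V}

lemma adj_of_mem_maxClique {K : MaxClique G} {x y : V} (hx : x ∈ K.1) (hy : y ∈ K.1)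
    (hxy : x ≠ y) : G.Adj x y :=
  K.2.1 hx hy hxy

lemma exists_maxClique_superset {s : Set V} (hs : G.IsClique s) :
    ∃ K : MaxClique G, s ⊆ K.1 := by
  obtain ⟨K, hK, hmax⟩ := Set.Finite.exists_maximalFor id {t : Set V | G.IsClique t ∧ s ⊆ t}
    (Set.toFinite _) ⟨s, hs, subset_rfl⟩
  exact ⟨⟨K, hK.1, fun t ht hKt => Set.Subset.antisymm hKt (hmax ⟨ht, hK.2.trans hKt⟩ hKt)⟩, hK.2⟩

lemma exists_maxClique_pair {x y : V} (h : G.Adj x y) :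
    ∃ K : MaxClique G, x ∈ K.1 ∧ y ∈ K.1 := by
  have hclique : G.IsClique {x, y} := by
    intro a ha b hb hab
    rcases ha with rfl | ha <;> rcases hb with rfl | hb
    · exact absurd rfl hab
    · rcases hb with rfl; exact h
    · rcases ha with rfl; exact h.symm
    · rcases ha with rfl; rcases hb with rfl; exact absurd rfl hab
  obtain ⟨K, hK⟩ := exists_maxClique_superset hclique
  exact ⟨K, hK (by simp), hK (by simp)⟩

lemma exists_mem_not_mem_of_ne {K K' : MaxClique G} (h : K ≠ K') :
    ∃ c, c ∈ K.1 ∧ c ∉ K'.1 := by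
  by_contra hc
  push_neg at hc
  exact h (Subtype.ext (K.2.2 K'.1 K'.2.1 hc))

lemma clawfree_elim (hcf : ClawFree G) {s a b c : V}
    (hsa : G.Adj s a) (hsb : G.Adj s b) (hsc : G.Adj s c)
    (hab : ¬ G.Adj a b) (hac : ¬ G.Adj a c) (hbc : ¬ G.Adj b c)
    (nab : a ≠ b) (nac : a ≠ c) (nbc : b ≠ c) : False := by
  have hab' : ¬ G.Adj b a := fun h => hab h.symm
  have hac' : ¬ G.Adj c a := fun h => hac h.symm
  have hbc' : ¬ G.Adj c b := fun h => hbc h.symm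
  refine hcf.false ⟨⟨Sum.elim (fun _ => s) ![a, b, c], ?_⟩, ?_⟩
  · rintro (x | x) (y | y) hxy
    · simp [Subsingleton.elim x y]
    · exfalso
      simp only [Sum.elim_inl, Sum.elim_inr] at hxy
      fin_cases y <;> simp_all <;>
        first
          | exact hsa.ne hxy
          | exact hsb.ne hxy
          | exact hsc.ne hxy
    · exfalso
      simp only [Sum.elim_inl, Sum.elim_inr] at hxy
      fin_cases x <;> simp_all <;>
        first
          | exact hsa.ne hxy.symm
          | exact hsb.ne hxy.symm
          | exact hsc.ne hxy.symm
    · simp only [Sum.elim_inr] at hxy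
      congr 1
      fin_cases x <;> fin_cases y <;> simp_all
  · rintro (x | x) (y | y) <;>
      simp only [Sum.elim_inl, Sum.elim_inr, completeBipartiteGraph_adj, Sum.isLeft_inl,
        Sum.isRight_inl, Sum.isLeft_inr, Sum.isRight_inr]
    · constructor
      · intro h; exact absurd h (G.irrefl)
      · rintro (⟨-, h⟩ | ⟨h, -⟩) <;> simp at h
    · constructor
      · intro _; left; exact ⟨trivial, trivial⟩
      · intro _; fin_cases y
        · exact hsa
        · exact hsb
        · exact hsc
    · constructor
      · intro _; right; exact ⟨trivial, trivial⟩
      · intro _; fin_cases x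
        · exact hsa.symm
        · exact hsb.symm
        · exact hsc.symm
    · constructor
      · intro h; exfalso; fin_cases x <;> fin_cases y <;>
          first
            | exact hab h | exact hac h | exact hbc h
            | exact hab' h | exact hac' h | exact hbc' h | simp_all
      · rintro (⟨h, -⟩ | ⟨-, h⟩) <;> simp at h

end Aux

section Tree

open SimpleGraph Walk

variable {V : Type*} [Fintype V] {G : SimpleGraph V} {T : SimpleGraph (MaxClique G)}

lemma walk_unique (hT : IsCliqueTree G T) {X Y : MaxClique G} {p q : T.Walk X Y}
    (hp : p.IsPath) (hq : q.IsPath) : p = q := by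
  have := hT.isTree.IsAcyclic.path_unique ⟨p, hp⟩ ⟨q, hq⟩
  exact congrArg Subtype.val this

lemma exists_tpath (hT : IsCliqueTree G T) (X Y : MaxClique G) :
    ∃ p : T.Walk X Y, p.IsPath := by
  classical
  obtain ⟨w⟩ := hT.isTree.isConnected.preconnected X Y
  exact ⟨w.toPath.1, w.toPath.2⟩

lemma conv (hT : IsCliqueTree G T) {v : V} {X Y : MaxClique G}
    (hX : v ∈ X.1) (hY : v ∈ Y.1) {p : T.Walk X Y} (hp : p.IsPath) :
    ∀ Z ∈ p.support, v ∈ Z.1 := by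
  classical
  obtain ⟨q⟩ := (hT.induced_connected v).preconnected ⟨X, hX⟩ ⟨Y, hY⟩
  let q' : T.Walk X Y := q.map (SimpleGraph.Embedding.induce (cliquesOf G v)).toHom
  have hsub : ∀ Z ∈ q'.support, v ∈ Z.1 := by
    intro Z hZ
    rw [show q'.support = q.support.map _ from Walk.support_map _ _] at hZ
    rw [List.mem_map] at hZ
    obtain ⟨⟨Z', hZ'⟩, -, rfl⟩ := hZ
    exact hZ'
  have hq' : p = (q'.toPath : T.Walk X Y) := walk_unique hT hp q'.toPath.2
  intro Z hZ
  rw [hq'] at hZ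
  exact hsub Z (Walk.support_toPath_subset q' hZ)

lemma conv3 (hT : IsCliqueTree G T) {v : V} {C B D : MaxClique G}
    (hCB : T.Adj C B) (hBD : T.Adj B D) (hCD : C ≠ D)
    (hC : v ∈ C.1) (hD : v ∈ D.1) : v ∈ B.1 := by
  have hpath : (Walk.cons hCB (Walk.cons hBD Walk.nil)).IsPath := by
    simp [Walk.cons_isPath_iff, hBD.ne, hCD, hCB.ne]
  exact conv hT hC hD hpath B (by simp)

lemma conv4 (hT : IsCliqueTree G T) {v : V} {E B AP Y : MaxClique G}
    (hEB : T.Adj E B) (hBAP : T.Adj B AP) (hAPY : T.Adj AP Y)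
    (hEAP : E ≠ AP) (hEY : E ≠ Y) (hBY : B ≠ Y)
    (hE : v ∈ E.1) (hY : v ∈ Y.1) : v ∈ AP.1 := by
  have hpath : (Walk.cons hEB (Walk.cons hBAP (Walk.cons hAPY Walk.nil))).IsPath := by
    simp [Walk.cons_isPath_iff, hEB.ne, hBAP.ne, hAPY.ne, hEAP, hEY, hBY]
  exact conv hT hE hY hpath AP (by simp)

lemma nbr_ne_depth2 (hT : IsCliqueTree G T) {B E AP Y : MaxClique G}
    (hBE : T.Adj B E) (hBAP : T.Adj B AP) (hAPY : T.Adj AP Y)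
    (hYB : Y ≠ B) (hEAP : E ≠ AP) : E ≠ Y := by
  rintro rfl
  have h1 : (Walk.cons hBE Walk.nil).IsPath := by simp [Walk.cons_isPath_iff, hBE.ne]
  have h2 : (Walk.cons hBAP (Walk.cons hAPY Walk.nil)).IsPath := by
    simp [Walk.cons_isPath_iff, hBAP.ne, hAPY.ne, hYB.symm, hEAP.symm]
  have h := walk_unique hT h1 h2
  have := congrArg Walk.length h
  simp [Walk.length_cons] at this

lemma second_eq (hT : IsCliqueTree G T) {B C E F : MaxClique G}
    {hBC : T.Adj B C} {hBE : T.Adj B E} {p1 : T.Walk C F} {p2 : T.Walk E F}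
    (h1 : (Walk.cons hBC p1).IsPath) (h2 : (Walk.cons hBE p2).IsPath) : C = E := by
  have h := walk_unique hT h1 h2
  have hs := congrArg Walk.support h
  rw [Walk.support_cons, Walk.support_cons, p1.support_eq_cons, p2.support_eq_cons] at hs
  rw [List.cons.injEq, List.cons.injEq] at hs
  exact hs.2.1

lemma branch_cons (hT : IsCliqueTree G T) {B C F : MaxClique G} (hBC : T.Adj B C) {c : V}
    (hcC : c ∈ C.1) (hcF : c ∈ F.1) (hcB : c ∉ B.1) :
    ∃ p : T.Walk C F, (Walk.cons hBC p).IsPath ∧ ∀ Z ∈ p.support, c ∈ Z.1 := by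
  obtain ⟨p, hp⟩ := exists_tpath hT C F
  have hmem := conv hT hcC hcF hp
  exact ⟨p, (Walk.cons_isPath_iff _ _).2 ⟨hp, fun hB => hcB (hmem B hB)⟩, hmem⟩

lemma branch2_cons (hT : IsCliqueTree G T) {B AP Y F : MaxClique G}
    (hBAP : T.Adj B AP) (hAPY : T.Adj AP Y) (hYB : Y ≠ B) {c : V}
    (hcY : c ∈ Y.1) (hcF : c ∈ F.1) (hcAP : c ∉ AP.1) :
    ∃ p : T.Walk Y F, (Walk.cons hBAP (Walk.cons hAPY p)).IsPath ∧ ∀ Z ∈ p.support, c ∈ Z.1 := by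
  have hcB : c ∉ B.1 := fun h => hcAP (conv3 hT hBAP hAPY hYB.symm h hcY)
  obtain ⟨p, hp⟩ := exists_tpath hT Y F
  have hmem := conv hT hcY hcF hp
  refine ⟨p, ?_, hmem⟩
  rw [Walk.cons_isPath_iff, Walk.cons_isPath_iff]
  refine ⟨⟨hp, fun h => hcAP (hmem AP h)⟩, ?_⟩
  rw [Walk.support_cons]
  simp only [List.mem_cons]
  rintro (h | h)
  · exact hBAP.ne h
  · exact hcB (hmem B h)

lemma mem_of_adj_branch (hT : IsCliqueTree G T) {B C : MaxClique G} (hBC : T.Adj B C) {b c : V}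
    (hb : b ∈ B.1) (hcC : c ∈ C.1) (hcB : c ∉ B.1) (hadj : G.Adj b c) : b ∈ C.1 := by
  obtain ⟨F, hbF, hcF⟩ := exists_maxClique_pair hadj
  obtain ⟨p, hp, -⟩ := branch_cons hT hBC hcC hcF hcB
  refine conv hT hb hbF hp C ?_
  rw [Walk.support_cons]
  exact List.mem_cons_of_mem _ p.start_mem_support

lemma mem2_of_adj_branch2 (hT : IsCliqueTree G T) {B AP Y : MaxClique G}
    (hBAP : T.Adj B AP) (hAPY : T.Adj AP Y) (hYB : Y ≠ B) {b c : V}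
    (hb : b ∈ B.1) (hcY : c ∈ Y.1) (hcAP : c ∉ AP.1) (hadj : G.Adj b c) :
    b ∈ AP.1 ∧ b ∈ Y.1 := by
  obtain ⟨F, hbF, hcF⟩ := exists_maxClique_pair hadj
  obtain ⟨p, hp, -⟩ := branch2_cons hT hBAP hAPY hYB hcY hcF hcAP
  have hconv := conv hT hb hbF hp
  constructor
  · refine hconv AP ?_
    rw [Walk.support_cons]
    exact List.mem_cons_of_mem _ (Walk.start_mem_support _)
  · refine hconv Y ?_
    rw [Walk.support_cons, Walk.support_cons]
    exact List.mem_cons_of_mem _ (List.mem_cons_of_mem _ p.start_mem_support)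

lemma not_adj_branches (hT : IsCliqueTree G T) {B C E : MaxClique G}
    (hBC : T.Adj B C) (hBE : T.Adj B E) (hCE : C ≠ E) {c e : V}
    (hcC : c ∈ C.1) (hcB : c ∉ B.1) (heE : e ∈ E.1) (heB : e ∉ B.1) :
    ¬ G.Adj c e ∧ c ≠ e := by
  constructor
  · intro hadj
    obtain ⟨F, hcF, heF⟩ := exists_maxClique_pair hadj
    obtain ⟨p1, h1, -⟩ := branch_cons hT hBC hcC hcF hcB
    obtain ⟨p2, h2, -⟩ := branch_cons hT hBE heE heF heB
    exact hCE (second_eq hT h1 h2)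
  · rintro rfl
    exact hcB (conv3 hT hBC.symm hBE hCE hcC heE)

lemma not_adj_branch2 (hT : IsCliqueTree G T) {B AP Y E : MaxClique G}
    (hBAP : T.Adj B AP) (hAPY : T.Adj AP Y) (hYB : Y ≠ B)
    (hBE : T.Adj B E) (hEAP : E ≠ AP) {t e : V}
    (htY : t ∈ Y.1) (htAP : t ∉ AP.1) (heE : e ∈ E.1) (heB : e ∉ B.1) :
    ¬ G.Adj t e ∧ t ≠ e := by
  have hEY : E ≠ Y := nbr_ne_depth2 hT hBE hBAP hAPY hYB hEAP
  constructor
  · intro hadj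
    obtain ⟨F, htF, heF⟩ := exists_maxClique_pair hadj
    obtain ⟨p1, h1, -⟩ := branch2_cons hT hBAP hAPY hYB htY htF htAP
    obtain ⟨p2, h2, -⟩ := branch_cons hT hBE heE heF heB
    exact hEAP (second_eq hT h2 h1)
  · rintro rfl
    exact htAP (conv4 hT hBE.symm hBAP hAPY hEAP hEY hYB.symm heE htY)

end Tree

section Core

open SimpleGraph Walk

variable {V : Type*} [Fintype V] {G : SimpleGraph V} {T : SimpleGraph (MaxClique G)}

lemma not_mem_three (hcf : ClawFree G) (hT : IsCliqueTree G T) {B C D E : MaxClique G}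
    (hBC : T.Adj B C) (hBD : T.Adj B D) (hBE : T.Adj B E)
    (hCD : C ≠ D) (hCE : C ≠ E) (hDE : D ≠ E) {z : V}
    (hzC : z ∈ C.1) (hzD : z ∈ D.1) (hzE : z ∈ E.1) : False := by
  have hzB : z ∈ B.1 := conv3 hT hBC.symm hBD hCD hzC hzD
  obtain ⟨c, hcC, hcB⟩ := exists_mem_not_mem_of_ne hBC.ne'
  obtain ⟨d, hdD, hdB⟩ := exists_mem_not_mem_of_ne hBD.ne'
  obtain ⟨e, heE, heB⟩ := exists_mem_not_mem_of_ne hBE.ne'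
  have hcd := not_adj_branches hT hBC hBD hCD hcC hcB hdD hdB
  have hce := not_adj_branches hT hBC hBE hCE hcC hcB heE heB
  have hde := not_adj_branches hT hBD hBE hDE hdD hdB heE heB
  exact clawfree_elim hcf
    (adj_of_mem_maxClique hzC hcC (fun h => hcB (h ▸ hzB)))
    (adj_of_mem_maxClique hzD hdD (fun h => hdB (h ▸ hzB)))
    (adj_of_mem_maxClique hzE heE (fun h => heB (h ▸ hzB)))
    hcd.1 hce.1 hde.1 hcd.2 hce.2 hde.2

lemma lemK (hcf : ClawFree G) (hT : IsCliqueTree G T) {B C D : MaxClique G}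
    (hBC : T.Adj B C) (hBD : T.Adj B D) (hCD : C ≠ D) {s : V}
    (hsC : s ∈ C.1) (hsD : s ∈ D.1) : B.1 ⊆ C.1 ∪ D.1 := by
  have hsB : s ∈ B.1 := conv3 hT hBC.symm hBD hCD hsC hsD
  intro b hb
  by_contra hbCD
  have hbC : b ∉ C.1 := fun h => hbCD (Or.inl h)
  have hbD : b ∉ D.1 := fun h => hbCD (Or.inr h)
  obtain ⟨c, hcC, hcB⟩ := exists_mem_not_mem_of_ne hBC.ne'
  obtain ⟨d, hdD, hdB⟩ := exists_mem_not_mem_of_ne hBD.ne'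
  have hcd := not_adj_branches hT hBC hBD hCD hcC hcB hdD hdB
  exact clawfree_elim hcf
    (adj_of_mem_maxClique hsC hcC (fun h => hcB (h ▸ hsB)))
    (adj_of_mem_maxClique hsD hdD (fun h => hdB (h ▸ hsB)))
    (adj_of_mem_maxClique hsB hb (fun h => hbC (h ▸ hsC)))
    hcd.1
    (fun h => hbC (mem_of_adj_branch hT hBC hb hcC hcB h.symm))
    (fun h => hbD (mem_of_adj_branch hT hBD hb hdD hdB h.symm))
    hcd.2 (fun h => hbC (h ▸ hcC)) (fun h => hbD (h ▸ hdD))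

lemma noExt (hcf : ClawFree G) (hT : IsCliqueTree G T) {B C D E Y : MaxClique G}
    (hBC : T.Adj B C) (hBD : T.Adj B D) (hBE : T.Adj B E)
    (hCD : C ≠ D) (hCE : C ≠ E) (hDE : D ≠ E)
    (hDY : T.Adj D Y) (hYB : Y ≠ B)
    {x : V} (hxD : x ∈ D.1) (hxE : x ∈ E.1)
    {s : V} (hsC : s ∈ C.1) (hsE : s ∈ E.1)
    {y : V} (hyC : y ∈ C.1) (hyD : y ∈ D.1) (hyY : y ∈ Y.1) : False := by
  have hyB : y ∈ B.1 := conv3 hT hBC.symm hBD hCD hyC hyD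
  have hxB : x ∈ B.1 := conv3 hT hBD.symm hBE hDE hxD hxE
  obtain ⟨c, hcC, hcB⟩ := exists_mem_not_mem_of_ne hBC.ne'
  obtain ⟨e, heE, heB⟩ := exists_mem_not_mem_of_ne hBE.ne'
  obtain ⟨yc, hycY, hycD⟩ := exists_mem_not_mem_of_ne hDY.ne'
  have hycB : yc ∉ B.1 := fun h => hycD (conv3 hT hBD hDY hYB.symm h hycY)
  -- every vertex of D ∩ E lies in Y
  have step1 : ∀ b : V, b ∈ D.1 → b ∈ E.1 → b ∈ Y.1 := by
    intro b hbD hbE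
    by_contra hbY
    have hbB : b ∈ B.1 := conv3 hT hBD.symm hBE hDE hbD hbE
    have hbC : b ∉ C.1 := fun h => not_mem_three hcf hT hBC hBD hBE hCD hCE hDE h hbD hbE
    have hyE : y ∉ E.1 := fun h => not_mem_three hcf hT hBC hBD hBE hCD hCE hDE hyC hyD h
    have hcyc := not_adj_branch2 hT hBD hDY hYB hBC hCD hycY hycD hcC hcB
    exact clawfree_elim hcf
      (adj_of_mem_maxClique hyC hcC (fun h => hcB (h ▸ hyB)))
      (adj_of_mem_maxClique hyY hycY (fun h => hycD (h ▸ hyD)))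
      (adj_of_mem_maxClique hyB hbB (fun h => hyE (h ▸ hbE)))
      (fun h => hcyc.1 h.symm)
      (fun h => hbC (mem_of_adj_branch hT hBC hbB hcC hcB h.symm))
      (fun h => hbY ((mem2_of_adj_branch2 hT hBD hDY hYB hbB hycY hycD h.symm).2))
      (fun h => hcyc.2 h.symm) (fun h => hbC (h ▸ hcC)) (fun h => hycB (h ▸ hbB))
  have hxY : x ∈ Y.1 := step1 x hxD hxE
  -- every vertex of C ∩ D lies in Y
  have step2 : ∀ z : V, z ∈ C.1 → z ∈ D.1 → z ∈ Y.1 := by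
    intro z hzC hzD
    by_contra hzY
    have hzB : z ∈ B.1 := conv3 hT hBC.symm hBD hCD hzC hzD
    have hzE : z ∉ E.1 := fun h => not_mem_three hcf hT hBC hBD hBE hCD hCE hDE hzC hzD h
    have hxC : x ∉ C.1 := fun h => not_mem_three hcf hT hBC hBD hBE hCD hCE hDE h hxD hxE
    have heyc := not_adj_branch2 hT hBD hDY hYB hBE hDE.symm hycY hycD heE heB
    exact clawfree_elim hcf
      (adj_of_mem_maxClique hxE heE (fun h => heB (h ▸ hxB)))
      (adj_of_mem_maxClique hxY hycY (fun h => hycD (h ▸ hxD)))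
      (adj_of_mem_maxClique hxB hzB (fun h => hxC (h ▸ hzC)))
      (fun h => heyc.1 h.symm)
      (fun h => hzE (mem_of_adj_branch hT hBE hzB heE heB h.symm))
      (fun h => hzY ((mem2_of_adj_branch2 hT hBD hDY hYB hzB hycY hycD h.symm).2))
      (fun h => heyc.2 h.symm) (fun h => heB (h ▸ hzB)) (fun h => hycB (h.symm ▸ hzB))
  -- B ⊆ C ∪ E
  have hBCE := lemK hcf hT hBC hBE hCE hsC hsE
  -- D ⊆ Y
  have hDsubY : D.1 ⊆ Y.1 := by
    intro d hd
    by_cases hdB : d ∈ B.1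
    · rcases hBCE hdB with hdC | hdE
      · exact step2 d hdC hd
      · exact step1 d hd hdE
    · rcases lemK hcf hT hBD.symm hDY hYB.symm hyB hyY hd with h | h
      · exact absurd h hdB
      · exact h
  have hDY' : D = Y := Subtype.ext (D.2.2 Y.1 Y.2.1 hDsubY)
  exact hDY.ne hDY'

end Core

section Exact

open SimpleGraph Walk

variable {V : Type*} [Fintype V] {G : SimpleGraph V} {T : SimpleGraph (MaxClique G)}

lemma exact_cliques (hcf : ClawFree G) (hT : IsCliqueTree G T) {B C D E : MaxClique G}
    (hBC : T.Adj B C) (hBD : T.Adj B D) (hBE : T.Adj B E)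
    (hCD : C ≠ D) (hCE : C ≠ E) (hDE : D ≠ E)
    {v x s : V} (hvC : v ∈ C.1) (hvD : v ∈ D.1)
    (hxD : x ∈ D.1) (hxE : x ∈ E.1) (hsC : s ∈ C.1) (hsE : s ∈ E.1) :
    cliquesOf G v = {C, B, D} := by
  have hvB : v ∈ B.1 := conv3 hT hBC.symm hBD hCD hvC hvD
  apply Set.eq_of_subset_of_subset
  · intro F hF
    have hvF : v ∈ F.1 := hF
    by_contra hFmem
    simp only [Set.mem_insert_iff, Set.mem_singleton_iff, not_or] at hFmem
    obtain ⟨hFC, hFB, hFD⟩ := hFmem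
    obtain ⟨p, hp⟩ := exists_tpath hT B F
    cases p with
    | nil => exact hFB rfl
    | cons hBN q =>
      rename_i N
      have hconvp := conv hT hvB hvF hp
      have hvN : v ∈ N.1 := hconvp N (by
        rw [Walk.support_cons]
        exact List.mem_cons_of_mem _ q.start_mem_support)
      have hNCD : N = C ∨ N = D := by
        by_contra hN
        push_neg at hN
        exact not_mem_three hcf hT hBC hBD hBN hCD (fun h => hN.1 h.symm)
          (fun h => hN.2 h.symm) hvC hvD hvN
      cases q with
      | nil =>
        rcases hNCD with rfl | rfl
        · exact hFC rfl
        · exact hFD rfl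
      | cons hNY r =>
        rename_i Y
        have hYB : Y ≠ B := by
          rintro rfl
          have := (Walk.cons_isPath_iff _ _).1 hp
          exact this.2 (by
            rw [Walk.support_cons]
            exact List.mem_cons_of_mem _ r.start_mem_support)
        have hvY : v ∈ Y.1 := hconvp Y (by
          rw [Walk.support_cons, Walk.support_cons]
          exact List.mem_cons_of_mem _ (List.mem_cons_of_mem _ r.start_mem_support))
        rcases hNCD with rfl | rfl
        · exact noExt hcf hT hBD hBN hBE hCD.symm hDE hCE hNY hYB hsC hsE hxD hxE hvD hvC hvY
        · exact noExt hcf hT hBC hBN hBE hCD hCE hDE hNY hYB hxD hxE hsC hsE hvC hvD hvY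
  · intro F hF
    simp only [Set.mem_insert_iff, Set.mem_singleton_iff] at hF
    rcases hF with rfl | rfl | rfl
    · exact hvC
    · exact hvB
    · exact hvD

end Exact


/-- Let `G` be a connected chordal claw-free graph with clique
tree `T`, `u, w ∈ V`, and `B` a max clique.  If the paths `T[M_u]` and `T[M_w]`
fork in `B`, then `B` has a fork triangle. -/
theorem fork_implies_forkTriangle {V : Type*} [Fintype V] [Nonempty V]
    (G : SimpleGraph V) (hconn : G.Connected) (hch : IsChordal G)
    (hcf : ClawFree G) (T : SimpleGraph (MaxClique G)) (hT : IsCliqueTree G T)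
    (u w : V) (B : MaxClique G)
    (hfork : ForkAt T (cliquesOf G u) (cliquesOf G w) B) :
    HasForkTriangle G T B := by
  obtain ⟨A', AP, AQ, hA'u, hA'w, hBu, hBw, hAPu, hAQw, hadjA'B, hadjBAP, hadjBAQ,
    hA'AP, hA'AQ, hAPnw, hAQnu⟩ := hfork
  have hadjBA' : T.Adj B A' := hadjA'B.symm
  have huA' : u ∈ A'.1 := hA'u
  have huAP : u ∈ AP.1 := hAPu
  have hwA' : w ∈ A'.1 := hA'w
  have hwAQ : w ∈ AQ.1 := hAQw
  have hAPAQ : AP ≠ AQ := by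
    rintro rfl
    exact hAQnu hAPu
  -- B ⊆ A' ∪ AP and B ⊆ A' ∪ AQ
  have hBsub1 := lemK hcf hT hadjBA' hadjBAP hA'AP huA' huAP
  have hBsub2 := lemK hcf hT hadjBA' hadjBAQ hA'AQ hwA' hwAQ
  obtain ⟨x, hxB, hxA'⟩ := exists_mem_not_mem_of_ne hadjBA'.ne
  have hxAP : x ∈ AP.1 := by
    rcases hBsub1 hxB with h | h
    · exact absurd h hxA'
    · exact h
  have hxAQ : x ∈ AQ.1 := by
    rcases hBsub2 hxB with h | h
    · exact absurd h hxA'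
    · exact h
  refine ⟨A', AP, AQ, hA'AP, hA'AQ, hAPAQ, hadjBA', hadjBAP, hadjBAQ, ⟨u, ?_⟩, ⟨x, ?_⟩, ⟨w, ?_⟩⟩
  · exact exact_cliques hcf hT hadjBA' hadjBAP hadjBAQ hA'AP hA'AQ hAPAQ
      huA' huAP hxAP hxAQ hwA' hwAQ
  · exact exact_cliques hcf hT hadjBAP hadjBAQ hadjBA' hAPAQ hA'AP.symm hA'AQ.symm
      hxAP hxAQ hwAQ hwA' huAP huA'
  · exact exact_cliques hcf hT hadjBAQ hadjBA' hadjBAP hA'AQ.symm hAPAQ.symm hA'AP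
      hwAQ hwA' huA' huAP hxAQ hxAP
end

section
/- Let G = (V,E) be a connected chordal claw-free graph with clique tree T_G, and let z ∈ V. If a max clique B ∈ M_z has a fork triangle, then |M_z| = 3 and B is the middle vertex of the path T_G[M_z]. -/
open SimpleGraph

section Aux

variable {V : Type*} [Fintype V] {G : SimpleGraph V} {T : SimpleGraph (MaxClique G)}

lemma aux_exists_max (s : Set V) (hs : G.IsClique s) :
    ∃ t : MaxClique G, s ⊆ t.1 := by
  obtain ⟨t, ht, hmax⟩ := Set.Finite.exists_maximalFor id
    {t : Set V | G.IsClique t ∧ s ⊆ t} (Set.toFinite _) ⟨s, hs, subset_rfl⟩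
  exact ⟨⟨t, ht.1, fun t' ht' hsub => le_antisymm hsub (hmax ⟨ht', ht.2.trans hsub⟩ hsub)⟩, ht.2⟩

lemma aux_adj_common {x y : V} (h : G.Adj x y) :
    ∃ D : MaxClique G, x ∈ D.1 ∧ y ∈ D.1 := by
  have hcl : G.IsClique {x, y} := by
    intro a ha b hb hne
    simp only [Set.mem_insert_iff, Set.mem_singleton_iff] at ha hb
    rcases ha with rfl | rfl <;> rcases hb with rfl | rfl
    · exact absurd rfl hne
    · exact h
    · exact h.symm
    · exact absurd rfl hne
  obtain ⟨t, hsub⟩ := aux_exists_max {x, y} hcl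
  exact ⟨t, hsub (by simp), hsub (by simp)⟩

lemma exists_not_mem {A B : MaxClique G} (h : A ≠ B) : ∃ x ∈ A.1, x ∉ B.1 :=
  Set.not_subset.1 fun hsub => h (Subtype.ext (A.2.2 B.1 B.2.1 hsub))

lemma aux_walk_in (hT : IsCliqueTree G T) {z : V} {X Y : MaxClique G}
    (hX : z ∈ X.1) (hY : z ∈ Y.1) :
    ∃ q : T.Walk X Y, ∀ m ∈ q.support, z ∈ m.1 := by
  obtain ⟨w⟩ := (hT.induced_connected z).preconnected ⟨X, hX⟩ ⟨Y, hY⟩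
  refine ⟨w.map (SimpleGraph.Embedding.induce (cliquesOf G z)).toHom, ?_⟩
  intro m hm
  replace hm := (congrArg (m ∈ ·) (SimpleGraph.Walk.support_map (SimpleGraph.Embedding.induce (cliquesOf G z)).toHom w)).mp hm
  obtain ⟨⟨m', hm'⟩, _, rfl⟩ := List.mem_map.1 hm
  exact hm'

lemma tree_path_subset (ht : T.IsTree) {a b : MaxClique G} {p q : T.Walk a b}
    (hp : p.IsPath) : p.support ⊆ q.support := by
  classical
  have h1 : p = (q.toPath : T.Walk a b) :=
    (ht.existsUnique_path a b).unique hp q.toPath.2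
  rw [h1]
  exact q.support_toPath_subset

lemma sep_of_path (ht : T.IsTree) {a b m : MaxClique G} (p : T.Walk a b)
    (hp : p.IsPath) (hm : m ∈ p.support) (q : T.Walk a b) : m ∈ q.support :=
  tree_path_subset ht hp hm

lemma sep_neighbors (ht : T.IsTree) {B X Y : MaxClique G} (hX : T.Adj B X)
    (hY : T.Adj B Y) (hne : X ≠ Y) (q : T.Walk X Y) : B ∈ q.support := by
  have hp : (SimpleGraph.Walk.cons hX.symm (SimpleGraph.Walk.cons hY
      SimpleGraph.Walk.nil)).IsPath := by
    simp [SimpleGraph.Walk.isPath_def, hX.ne', hY.ne, hne]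
  exact sep_of_path ht _ hp (by simp) q

lemma mem_of_sep (hT : IsCliqueTree G T) {z : V} {X Y m : MaxClique G}
    (hX : z ∈ X.1) (hY : z ∈ Y.1)
    (hsep : ∀ q : T.Walk X Y, m ∈ q.support) : z ∈ m.1 := by
  obtain ⟨q, hq⟩ := aux_walk_in hT hX hY
  exact hq m (hsep q)

lemma not_adj_of_sep (hT : IsCliqueTree G T) {x y : V} {X Y m : MaxClique G}
    (hsep : ∀ q : T.Walk X Y, m ∈ q.support)
    (hXx : x ∈ X.1) (hYy : y ∈ Y.1) (hmx : x ∉ m.1) (hmy : y ∉ m.1) :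
    x ≠ y ∧ ¬G.Adj x y := by
  constructor
  · rintro rfl
    exact hmx (mem_of_sep hT hXx hYy hsep)
  · intro hadj
    obtain ⟨D, hxD, hyD⟩ := aux_adj_common hadj
    obtain ⟨q1, hq1⟩ := aux_walk_in hT hXx hxD
    obtain ⟨q2, hq2⟩ := aux_walk_in hT hYy hyD
    have hm := hsep (q1.append q2.reverse)
    rw [SimpleGraph.Walk.mem_support_append_iff] at hm
    rcases hm with h | h
    · exact hmx (hq1 m h)
    · exact hmy (hq2 m (by rwa [SimpleGraph.Walk.support_reverse, List.mem_reverse] at h))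

lemma not_adj_of_edge (hT : IsCliqueTree G T) {x y : V} {Bm Am : MaxClique G}
    (hadj : T.Adj Bm Am) (hxB : x ∈ Bm.1) (hxA : x ∉ Am.1)
    (hyA : y ∈ Am.1) (hyB : y ∉ Bm.1) : x ≠ y ∧ ¬G.Adj x y := by
  constructor
  · rintro rfl; exact hyB hxB
  · intro h
    obtain ⟨D, hxD, hyD⟩ := aux_adj_common h
    obtain ⟨q1, hq1⟩ := aux_walk_in hT hxB hxD
    obtain ⟨q2, hq2⟩ := aux_walk_in hT hyA hyD
    classical
    have hAmP1 : Am ∉ (q1.toPath : T.Walk Bm D).support := fun hm =>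
      hxA (hq1 Am (q1.support_toPath_subset hm))
    have hpath : (SimpleGraph.Walk.cons hadj.symm
        (q1.toPath : T.Walk Bm D)).reverse.IsPath := by
      rw [SimpleGraph.Walk.isPath_reverse_iff]
      exact (q1.toPath.2).cons hAmP1
    have hBm : Bm ∈ (SimpleGraph.Walk.cons hadj.symm
        (q1.toPath : T.Walk Bm D)).reverse.support := by
      rw [SimpleGraph.Walk.support_reverse, List.mem_reverse]
      simp
    have hfin := sep_of_path hT.isTree _ hpath hBm q2.reverse
    rw [SimpleGraph.Walk.support_reverse, List.mem_reverse] at hfin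
    exact hyB (hq2 Bm hfin)

lemma claw_elim (hcf : ClawFree G) {c a b d : V}
    (hca : G.Adj c a) (hcb : G.Adj c b) (hcd : G.Adj c d)
    (hab : ¬G.Adj a b) (had : ¬G.Adj a d) (hbd : ¬G.Adj b d)
    (h1 : a ≠ b) (h2 : a ≠ d) (h3 : b ≠ d) : False := by
  have hba : ¬G.Adj b a := fun h => hab h.symm
  have hda : ¬G.Adj d a := fun h => had h.symm
  have hdb : ¬G.Adj d b := fun h => hbd h.symm
  let l : Fin 3 → V := ![a, b, d]
  have hadjl : ∀ i, G.Adj c (l i) := by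
    intro i; fin_cases i <;> assumption
  have hnadj : ∀ i j, ¬G.Adj (l i) (l j) := by
    intro i j; fin_cases i <;> fin_cases j <;>
      simp_all [l] <;> assumption
  have hinj : ∀ i j : Fin 3, l i = l j → i = j := by
    have h1' := h1.symm; have h2' := h2.symm; have h3' := h3.symm
    intro i j; fin_cases i <;> fin_cases j <;> simp_all [l]
  have emb : completeBipartiteGraph (Fin 1) (Fin 3) ↪g G := by
    refine ⟨⟨Sum.elim (fun _ => c) l, ?_⟩, ?_⟩
    · rintro (i | i) (j | j) h <;>
        simp only [Sum.elim_inl, Sum.elim_inr] at h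
      · exact congrArg Sum.inl (Subsingleton.elim i j)
      · exact absurd h.symm (hadjl j).ne'
      · exact absurd h (hadjl i).ne'
      · exact congrArg Sum.inr (hinj i j h)
    · rintro (i | i) (j | j) <;>
        simp only [Function.Embedding.coeFn_mk, Sum.elim_inl, Sum.elim_inr,
          completeBipartiteGraph_adj, Sum.isLeft_inl, Sum.isRight_inl,
          Sum.isLeft_inr, Sum.isRight_inr]
      · simp [DFunLike.coe]
      · dsimp only [DFunLike.coe]; simpa using hadjl j
      · dsimp only [DFunLike.coe]; simpa using (hadjl i).symm
      · dsimp only [DFunLike.coe]; simpa using hnadj i j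
  exact hcf.false emb

lemma no_three (hcf : ClawFree G) (hT : IsCliqueTree G T) {z : V}
    {B N1 N2 N3 : MaxClique G}
    (h1 : T.Adj B N1) (h2 : T.Adj B N2) (h3 : T.Adj B N3)
    (h12 : N1 ≠ N2) (h13 : N1 ≠ N3) (h23 : N2 ≠ N3)
    (hzB : z ∈ B.1) (hz1 : z ∈ N1.1) (hz2 : z ∈ N2.1) (hz3 : z ∈ N3.1) : False := by
  obtain ⟨x1, hx1, hx1B⟩ := exists_not_mem h1.ne'
  obtain ⟨x2, hx2, hx2B⟩ := exists_not_mem h2.ne'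
  obtain ⟨x3, hx3, hx3B⟩ := exists_not_mem h3.ne'
  obtain ⟨hne12, hnadj12⟩ := not_adj_of_sep hT
    (sep_neighbors hT.isTree h1 h2 h12) hx1 hx2 hx1B hx2B
  obtain ⟨hne13, hnadj13⟩ := not_adj_of_sep hT
    (sep_neighbors hT.isTree h1 h3 h13) hx1 hx3 hx1B hx3B
  obtain ⟨hne23, hnadj23⟩ := not_adj_of_sep hT
    (sep_neighbors hT.isTree h2 h3 h23) hx2 hx3 hx2B hx3B
  exact claw_elim hcf
    (N1.2.1 hz1 hx1 (fun h => hx1B (h ▸ hzB)))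
    (N2.2.1 hz2 hx2 (fun h => hx2B (h ▸ hzB)))
    (N3.2.1 hz3 hx3 (fun h => hx3B (h ▸ hzB)))
    hnadj12 hnadj13 hnadj23 hne12 hne13 hne23

lemma at_least_two (hcf : ClawFree G) (hT : IsCliqueTree G T) {z v : V}
    {B P Q : MaxClique G}
    (hP : T.Adj B P) (hQ : T.Adj B Q) (hPQ : P ≠ Q)
    (hv : cliquesOf G v = {P, B, Q})
    (hzB : z ∈ B.1) (hzP : z ∉ P.1) (hzQ : z ∉ Q.1) : False := by
  have hvP : v ∈ P.1 := by
    have : P ∈ cliquesOf G v := by rw [hv]; simp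
    exact this
  have hvB : v ∈ B.1 := by
    have : B ∈ cliquesOf G v := by rw [hv]; simp
    exact this
  have hvQ : v ∈ Q.1 := by
    have : Q ∈ cliquesOf G v := by rw [hv]; simp
    exact this
  obtain ⟨y, hyP, hyB⟩ := exists_not_mem hP.ne'
  obtain ⟨t, htQ, htB⟩ := exists_not_mem hQ.ne'
  obtain ⟨hne_zy, hnadj_zy⟩ := not_adj_of_edge hT hP hzB hzP hyP hyB
  obtain ⟨hne_zt, hnadj_zt⟩ := not_adj_of_edge hT hQ hzB hzQ htQ htB
  obtain ⟨hne_yt, hnadj_yt⟩ := not_adj_of_sep hT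
    (sep_neighbors hT.isTree hP hQ hPQ) hyP htQ hyB htB
  exact claw_elim hcf
    (B.2.1 hvB hzB (fun h => hzP (h ▸ hvP)))
    (P.2.1 hvP hyP (fun h => hyB (h ▸ hvB)))
    (Q.2.1 hvQ htQ (fun h => htB (h ▸ hvB)))
    hnadj_zy hnadj_zt hnadj_yt hne_zy hne_zt hne_yt

lemma claw_from_deep (hcf : ClawFree G) (hT : IsCliqueTree G T) {z ℓ : V}
    {B X Y W C : MaxClique G}
    (hBX : T.Adj B X) (hBY : T.Adj B Y) (hBW : T.Adj B W)
    (hXY : X ≠ Y) (hXW : X ≠ W) (hYW : Y ≠ W)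
    (hl : cliquesOf G ℓ = {W, B, X})
    (hzB : z ∈ B.1) (hzX : z ∈ X.1) (hzY : z ∈ Y.1) (hzW : z ∉ W.1)
    (hzC : z ∈ C.1) (hCB : C ≠ B) (hCX : C ≠ X) (hCY : C ≠ Y) (hCW : C ≠ W)
    (q : T.Walk X C) (hq : (SimpleGraph.Walk.cons hBX q).IsPath) : False := by
  classical
  have ht := hT.isTree
  set p : T.Walk B C := SimpleGraph.Walk.cons hBX q with hpdef
  have hqpath : q.IsPath := hq.of_cons
  have hBq : B ∉ q.support := ((SimpleGraph.Walk.cons_isPath_iff _ _).1 hq).2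
  have hnotin : ∀ N : MaxClique G, T.Adj B N → N ≠ X → N ∉ p.support := by
    intro N hBN hNX hNp
    rw [hpdef, SimpleGraph.Walk.support_cons, List.mem_cons] at hNp
    rcases hNp with rfl | hNq
    · exact hBN.ne rfl
    · have hB := sep_neighbors ht hBX hBN hNX.symm (q.takeUntil N hNq)
      exact hBq (q.support_takeUntil_subset hNq hB)
  have hYp : Y ∉ p.support := hnotin Y hBY (Ne.symm hXY)
  have hWp : W ∉ p.support := hnotin W hBW (fun h => hXW h.symm)
  have hXp : X ∈ p.support := by
    rw [hpdef, SimpleGraph.Walk.support_cons, List.mem_cons]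
    exact Or.inr q.start_mem_support
  have hBp : B ∈ p.support := p.start_mem_support
  -- paths from C
  have hrevpath : p.reverse.IsPath := hq.reverse
  have sepXCB : ∀ q' : T.Walk C B, X ∈ q'.support :=
    fun q' => sep_of_path ht p.reverse hrevpath
      (by rw [SimpleGraph.Walk.support_reverse, List.mem_reverse]; exact hXp) q'
  have hp2 : (SimpleGraph.Walk.cons hBY.symm p).IsPath :=
    (SimpleGraph.Walk.cons_isPath_iff _ _).2 ⟨hq, hYp⟩
  have sepXCY : ∀ q' : T.Walk C Y, X ∈ q'.support :=
    fun q' => sep_of_path ht (SimpleGraph.Walk.cons hBY.symm p).reverse hp2.reverse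
      (by rw [SimpleGraph.Walk.support_reverse, List.mem_reverse,
            SimpleGraph.Walk.support_cons, List.mem_cons]; exact Or.inr hXp) q'
  have sepBYC : ∀ q' : T.Walk Y C, B ∈ q'.support :=
    fun q' => sep_of_path ht (SimpleGraph.Walk.cons hBY.symm p) hp2
      (by rw [SimpleGraph.Walk.support_cons, List.mem_cons]; exact Or.inr hBp) q'
  have hp3 : (SimpleGraph.Walk.cons hBW.symm p).IsPath :=
    (SimpleGraph.Walk.cons_isPath_iff _ _).2 ⟨hq, hWp⟩
  have sepXCW : ∀ q' : T.Walk C W, X ∈ q'.support :=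
    fun q' => sep_of_path ht (SimpleGraph.Walk.cons hBW.symm p).reverse hp3.reverse
      (by rw [SimpleGraph.Walk.support_reverse, List.mem_reverse,
            SimpleGraph.Walk.support_cons, List.mem_cons]; exact Or.inr hXp) q'
  -- the three leaves
  obtain ⟨s, hsC, hsX⟩ := exists_not_mem hCX
  have hsB : s ∉ B.1 := fun h => hsX (mem_of_sep hT hsC h sepXCB)
  have hsY : s ∉ Y.1 := fun h => hsX (mem_of_sep hT hsC h sepXCY)
  have hsW : s ∉ W.1 := fun h => hsX (mem_of_sep hT hsC h sepXCW)
  obtain ⟨y, hyY, hyB⟩ := exists_not_mem hBY.ne'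
  have hyX : y ∉ X.1 := fun h => hyB (mem_of_sep hT h hyY (sep_neighbors ht hBX hBY hXY))
  have hyW : y ∉ W.1 := fun h => hyB (mem_of_sep hT hyY h (sep_neighbors ht hBY hBW hYW))
  have hlW : ℓ ∈ W.1 := by
    have : W ∈ cliquesOf G ℓ := by rw [hl]; simp
    exact this
  have hlB : ℓ ∈ B.1 := by
    have : B ∈ cliquesOf G ℓ := by rw [hl]; simp
    exact this
  have hlX : ℓ ∈ X.1 := by
    have : X ∈ cliquesOf G ℓ := by rw [hl]; simp
    exact this
  have keyy : ∀ D : MaxClique G, ℓ ∈ D.1 → y ∈ D.1 → False := by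
    intro D hD hyD
    have hDl : D ∈ cliquesOf G ℓ := hD
    rw [hl] at hDl
    simp only [Set.mem_insert_iff, Set.mem_singleton_iff] at hDl
    rcases hDl with rfl | rfl | rfl
    exacts [hyW hyD, hyB hyD, hyX hyD]
  have keys : ∀ D : MaxClique G, ℓ ∈ D.1 → s ∈ D.1 → False := by
    intro D hD hsD
    have hDl : D ∈ cliquesOf G ℓ := hD
    rw [hl] at hDl
    simp only [Set.mem_insert_iff, Set.mem_singleton_iff] at hDl
    rcases hDl with rfl | rfl | rfl
    exacts [hsW hsD, hsB hsD, hsX hsD]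
  obtain ⟨hne_ys, hnadj_ys⟩ := not_adj_of_sep hT sepBYC hyY hsC hyB hsB
  have hnadj_yl : ¬G.Adj y ℓ := by
    intro h
    obtain ⟨D, hD1, hD2⟩ := aux_adj_common h
    exact keyy D hD2 hD1
  have hnadj_sl : ¬G.Adj s ℓ := by
    intro h
    obtain ⟨D, hD1, hD2⟩ := aux_adj_common h
    exact keys D hD2 hD1
  have hne_yl : y ≠ ℓ := fun h => hyB (h ▸ hlB)
  have hne_sl : s ≠ ℓ := fun h => hsB (h ▸ hlB)
  exact claw_elim hcf
    (Y.2.1 hzY hyY (fun h => hyB (h ▸ hzB)))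
    (C.2.1 hzC hsC (fun h => hsX (h ▸ hzX)))
    (B.2.1 hzB hlB (fun h => hzW (h ▸ hlW)))
    hnadj_ys hnadj_yl hnadj_sl hne_ys hne_yl hne_sl

lemma cliques_eq (hcf : ClawFree G) (hT : IsCliqueTree G T) {z : V}
    {B X Y W : MaxClique G}
    (hBX : T.Adj B X) (hBY : T.Adj B Y) (hBW : T.Adj B W)
    (hXY : X ≠ Y) (hXW : X ≠ W) (hYW : Y ≠ W)
    (hWX : ∃ ℓ : V, cliquesOf G ℓ = {W, B, X})
    (hWY : ∃ ℓ : V, cliquesOf G ℓ = {W, B, Y})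
    (hzB : z ∈ B.1) (hzX : z ∈ X.1) (hzY : z ∈ Y.1) (hzW : z ∉ W.1) :
    cliquesOf G z = {B, X, Y} := by
  classical
  ext C
  simp only [Set.mem_insert_iff, Set.mem_singleton_iff]
  constructor
  · intro hC
    have hC' : z ∈ C.1 := hC
    by_contra hCnot
    push_neg at hCnot
    obtain ⟨hCB, hCX, hCY⟩ := hCnot
    have hCW : C ≠ W := fun h => hzW (h ▸ hC')
    obtain ⟨q0, hq0⟩ := aux_walk_in hT hzB hC'
    obtain ⟨pw, hpw, hsup⟩ : ∃ pw : T.Walk B C, pw.IsPath ∧ ∀ m ∈ pw.support, z ∈ m.1 :=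
      ⟨q0.toPath, q0.toPath.2, fun m hm => hq0 m (q0.support_toPath_subset hm)⟩
    cases pw with
    | nil => exact hCB rfl
    | cons h q =>
      rename_i A
      have hzA : z ∈ A.1 := hsup A (by
        rw [SimpleGraph.Walk.support_cons, List.mem_cons]
        exact Or.inr q.start_mem_support)
      rcases eq_or_ne A X with rfl | hAX
      · exact claw_from_deep hcf hT hBX hBY hBW hXY hXW hYW
          (Classical.choose_spec hWX) hzB hzX hzY hzW hC' hCB hCX hCY hCW q hpw
      rcases eq_or_ne A Y with rfl | hAY
      · exact claw_from_deep hcf hT hBY hBX hBW hXY.symm hYW hXW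
          (Classical.choose_spec hWY) hzB hzY hzX hzW hC' hCB hCY hCX hCW q hpw
      · exact no_three hcf hT h hBX hBY hAX hAY hXY hzB hzA hzX hzY
  · rintro (rfl | rfl | rfl)
    exacts [hzB, hzX, hzY]

end Aux

/-- Let `G` be a connected chordal claw-free graph with clique
tree `T`, and `z ∈ V`.  If a max clique `B ∈ M_z` has a fork triangle, then
`|M_z| = 3` and `B` is the middle vertex of the path `T[M_z]`, i.e. `B` is
adjacent in `T` to both other vertices of `M_z`. -/
theorem forkTriangle_middle {V : Type*} [Fintype V] [Nonempty V]
    (G : SimpleGraph V) (hconn : G.Connected) (hch : IsChordal G)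
    (hcf : ClawFree G) (T : SimpleGraph (MaxClique G)) (hT : IsCliqueTree G T)
    (z : V) (B : MaxClique G) (hB : B ∈ cliquesOf G z)
    (hft : HasForkTriangle G T B) :
    (cliquesOf G z).ncard = 3 ∧ ∀ C ∈ cliquesOf G z, C ≠ B → T.Adj B C := by
  obtain ⟨A1, A2, A3, h12, h13, h23, hB1, hB2, hB3, ⟨u, hu⟩, ⟨v, hv⟩, ⟨w, hw⟩⟩ := hft
  have hzB : z ∈ B.1 := hB
  have perm12 : ({A1, B, A2} : Set (MaxClique G)) = {A2, B, A1} := by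
    ext m; simp only [Set.mem_insert_iff, Set.mem_singleton_iff]; tauto
  have perm23 : ({A2, B, A3} : Set (MaxClique G)) = {A3, B, A2} := by
    ext m; simp only [Set.mem_insert_iff, Set.mem_singleton_iff]; tauto
  have perm31 : ({A3, B, A1} : Set (MaxClique G)) = {A1, B, A3} := by
    ext m; simp only [Set.mem_insert_iff, Set.mem_singleton_iff]; tauto
  have final : ∀ X Y : MaxClique G, cliquesOf G z = {B, X, Y} →
      T.Adj B X → T.Adj B Y → X ≠ Y →
      (cliquesOf G z).ncard = 3 ∧ ∀ C ∈ cliquesOf G z, C ≠ B → T.Adj B C := by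
    intro X Y heq hX hY hXY
    constructor
    · rw [heq, Set.ncard_insert_of_notMem (by simp [hX.ne, hY.ne]),
        Set.ncard_pair hXY]
    · intro C hC hne
      rw [heq] at hC
      simp only [Set.mem_insert_iff, Set.mem_singleton_iff] at hC
      rcases hC with rfl | rfl | rfl
      · exact absurd rfl hne
      · exact hX
      · exact hY
  by_cases hz1 : z ∈ A1.1 <;> by_cases hz2 : z ∈ A2.1 <;> by_cases hz3 : z ∈ A3.1
  · exact absurd (no_three hcf hT hB1 hB2 hB3 h12 h13 h23 hzB hz1 hz2 hz3) id
  · -- z ∈ A1, A2, ∉ A3 : M_z = {B, A1, A2}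
    exact final A1 A2
      (cliques_eq hcf hT hB1 hB2 hB3 h12 h13 h23
        ⟨w, hw⟩ ⟨v, hv.trans perm23⟩ hzB hz1 hz2 hz3) hB1 hB2 h12
  · -- z ∈ A1, A3, ∉ A2 : (X,Y,W) = (A1,A3,A2)
    exact final A1 A3
      (cliques_eq hcf hT hB1 hB3 hB2 h13 h12 h23.symm
        ⟨u, hu.trans perm12⟩ ⟨v, hv⟩ hzB hz1 hz3 hz2) hB1 hB3 h13
  · exact absurd (at_least_two hcf hT hB2 hB3 h23 hv hzB hz2 hz3) id
  · -- z ∈ A2, A3, ∉ A1 : (X,Y,W) = (A2,A3,A1)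
    exact final A2 A3
      (cliques_eq hcf hT hB2 hB3 hB1 h23 h12.symm h13.symm
        ⟨u, hu⟩ ⟨w, hw.trans perm31⟩ hzB hz2 hz3 hz1) hB2 hB3 h23
  · exact absurd (at_least_two hcf hT hB3 hB1 h13.symm hw hzB hz3 hz1) id
  · exact absurd (at_least_two hcf hT hB1 hB2 h12 hu hzB hz1 hz2) id
  · exact absurd (at_least_two hcf hT hB2 hB3 h23 hv hzB hz2 hz3) id
end

section
/- Let G be a chordal claw-free graph that admits a clique tree. Then every max clique A of G is spanned by a triple of vertices: there exist vertices u, v, w ∈ A such that A is the only max clique of G containing all of u, v, and w. -/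
open SimpleGraph

/-! Let `T` be a clique tree and `A` a max clique. Since `A` separates its neighbours in `T`,
two neighbours `B ≠ B'` of `A` meet only inside `A`, and no vertex of `B \ A` is adjacent to
a vertex of `B' \ A`. So a vertex of `A` lying in three neighbours of `A` would be the centre
of a claw: every `u ∈ A` lies in at most two neighbours `B₁, B₂`, and with `v ∈ A \ B₁`,
`w ∈ A \ B₂` no neighbour of `A` contains `u, v, w`. A max clique `B ≠ A` containing them
is impossible, because the first clique after `A` on the tree path from `A` to `B` contains
`A ∩ B`. -/

theorem IsMaximalClique.exists_of_isClique {V : Type*} {G : SimpleGraph V} {s : Set V}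
    (hs : G.IsClique s) : ∃ t, IsMaximalClique G t ∧ s ⊆ t := by
  obtain ⟨t, ⟨ht, hmax⟩, hst⟩ := ((isClique_iff_isChain_adj G).1 hs).exists_maxChain
  exact ⟨t, ⟨(isClique_iff_isChain_adj G).2 ht,
    fun u hu htu => hmax ((isClique_iff_isChain_adj G).1 hu) htu⟩, hst⟩

theorem IsMaximalClique.nonempty {V : Type*} [Nonempty V] {G : SimpleGraph V} {A : Set V}
    (hA : IsMaximalClique G A) : A.Nonempty := by
  obtain ⟨x⟩ := ‹Nonempty V›
  rw [Set.nonempty_iff_ne_empty]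
  rintro rfl
  exact Set.singleton_ne_empty x (hA.2 {x} (G.isClique_singleton x) (Set.empty_subset _)).symm

theorem MaxClique.exists_mem_notMem_of_ne {V : Type*} {G : SimpleGraph V}
    {A B : MaxClique G} (hne : A ≠ B) : ∃ x ∈ A.1, x ∉ B.1 := by
  by_contra! hAB
  exact hne (Subtype.ext (A.2.2 B.1 B.2.1 hAB))

theorem ClawFree.adj_of_adj {V : Type*} {G : SimpleGraph V} (hcf : ClawFree G)
    {a b₁ b₂ b₃ : V} (h₁ : G.Adj a b₁) (h₂ : G.Adj a b₂) (h₃ : G.Adj a b₃)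
    (h₁₂ : b₁ ≠ b₂) (h₁₃ : b₁ ≠ b₃) (h₂₃ : b₂ ≠ b₃) :
    G.Adj b₁ b₂ ∨ G.Adj b₁ b₃ ∨ G.Adj b₂ b₃ := by
  by_contra! ⟨n₁₂, n₁₃, n₂₃⟩
  refine hcf.false ⟨⟨Sum.elim (fun _ => a) ![b₁, b₂, b₃], ?_⟩, fun {x y} => ?_⟩
  · rintro (x | x) (y | y) <;> fin_cases x <;> fin_cases y <;>
      simp [h₁.ne, h₂.ne, h₃.ne, h₁.ne', h₂.ne', h₃.ne', h₁₂, h₁₃, h₂₃, h₁₂.symm, h₁₃.symm,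
        h₂₃.symm]
  · show G.Adj (Sum.elim _ _ x) (Sum.elim _ _ y) ↔ _
    rcases x with x | x <;> rcases y with y | y <;> fin_cases x <;> fin_cases y <;>
      simp [h₁, h₂, h₃, h₁.symm, h₂.symm, h₃.symm, n₁₂, n₁₃, n₂₃, G.adj_comm b₂ b₁,
        G.adj_comm b₃ b₁, G.adj_comm b₃ b₂]

theorem exists_pair_forall_notMem_or_notMem {α ι : Type*} {A : Set α} (hA : A.Nonempty)
    (c : ι → Set α) {N : Set ι} (hN : ∀ i ∈ N, ∀ j ∈ N, ∀ k ∈ N, i = j ∨ i = k ∨ j = k)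
    (hc : ∀ i ∈ N, ∃ x ∈ A, x ∉ c i) :
    ∃ v ∈ A, ∃ w ∈ A, ∀ i ∈ N, v ∉ c i ∨ w ∉ c i := by
  rcases N.eq_empty_or_nonempty with rfl | ⟨i, hi⟩
  · obtain ⟨v, hv⟩ := hA
    exact ⟨v, hv, v, hv, fun _ h => h.elim⟩
  obtain ⟨v, hv, hvi⟩ := hc i hi
  by_cases hj : ∀ j ∈ N, j = i
  · exact ⟨v, hv, v, hv, fun k hk => Or.inl (hj k hk ▸ hvi)⟩
  obtain ⟨j, hj, hji⟩ := not_forall₂.1 hj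
  obtain ⟨w, hw, hwj⟩ := hc j hj
  refine ⟨v, hv, w, hw, fun k hk => ?_⟩
  rcases hN i hi j hj k hk with rfl | rfl | rfl
  · exact absurd rfl hji
  · exact Or.inl hvi
  · exact Or.inr hwj

namespace SimpleGraph

variable {M : Type*} {T : SimpleGraph M}

theorem IsTree.support_subset_of_isPath (hT : T.IsTree) {x y : M} {p : T.Walk x y}
    (hp : p.IsPath) (q : T.Walk x y) : p.support ⊆ q.support := by
  classical
  rw [(hT.existsUnique_path x y).unique hp q.toPath.2]
  exact q.support_toPath_subset_support

theorem IsTree.mem_support_of_adj_of_adj (hT : T.IsTree) {a b c : M} (hab : T.Adj a b)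
    (hac : T.Adj a c) (hbc : b ≠ c) (q : T.Walk b c) : a ∈ q.support := by
  have hp : (Walk.cons hab.symm (Walk.cons hac Walk.nil)).IsPath := by
    simp [Walk.isPath_def, hab.ne', hac.ne, hbc]
  exact hT.support_subset_of_isPath hp q (by simp)

theorem exists_walk_forall_mem_of_connected_induce {S : Set M} (hS : (T.induce S).Connected)
    {x y : M} (hx : x ∈ S) (hy : y ∈ S) : ∃ q : T.Walk x y, ∀ z ∈ q.support, z ∈ S := by
  obtain ⟨q⟩ := hS.preconnected ⟨x, hx⟩ ⟨y, hy⟩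
  refine ⟨q.map (Embedding.induce S).toHom, fun z hz => ?_⟩
  obtain ⟨⟨z, hzS⟩, -, rfl⟩ := List.mem_map.1 ((q.support_map _) ▸ hz)
  exact hzS

end SimpleGraph

namespace IsCliqueTree

variable {V : Type*} {G : SimpleGraph V} {T : SimpleGraph (MaxClique G)}

theorem exists_walk_forall_mem (hT : IsCliqueTree G T) {x : V} {C C' : MaxClique G}
    (hC : x ∈ C.1) (hC' : x ∈ C'.1) : ∃ q : T.Walk C C', ∀ D ∈ q.support, x ∈ D.1 :=
  exists_walk_forall_mem_of_connected_induce (hT.induced_connected x) hC hC'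

theorem mem_of_mem_support_of_isPath (hT : IsCliqueTree G T) {x : V} {C C' D : MaxClique G}
    {p : T.Walk C C'} (hp : p.IsPath) (hC : x ∈ C.1) (hC' : x ∈ C'.1) (hD : D ∈ p.support) :
    x ∈ D.1 := by
  obtain ⟨q, hq⟩ := hT.exists_walk_forall_mem hC hC'
  exact hq D (hT.isTree.support_subset_of_isPath hp q hD)

theorem inter_subset_of_adj_of_adj (hT : IsCliqueTree G T) {A B B' : MaxClique G}
    (hB : T.Adj A B) (hB' : T.Adj A B') (hne : B ≠ B') : B.1 ∩ B'.1 ⊆ A.1 := by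
  rintro x ⟨hxB, hxB'⟩
  obtain ⟨q, hq⟩ := hT.exists_walk_forall_mem hxB hxB'
  exact hq A (hT.isTree.mem_support_of_adj_of_adj hB hB' hne q)

theorem not_adj_of_adj_of_adj (hT : IsCliqueTree G T) {A B B' : MaxClique G}
    (hB : T.Adj A B) (hB' : T.Adj A B') (hne : B ≠ B') {b b' : V} (hbB : b ∈ B.1)
    (hbA : b ∉ A.1) (hbB' : b' ∈ B'.1) (hbA' : b' ∉ A.1) : ¬ G.Adj b b' := by
  intro hbb'
  obtain ⟨C, hC, hbC⟩ := IsMaximalClique.exists_of_isClique (isClique_pair.2 fun _ => hbb')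
  obtain ⟨q, hq⟩ := hT.exists_walk_forall_mem (C' := ⟨C, hC⟩) hbB (hbC (by simp))
  obtain ⟨q', hq'⟩ := hT.exists_walk_forall_mem (C := ⟨C, hC⟩) (hbC (by simp)) hbB'
  rcases (Walk.mem_support_append_iff q q').1
      (hT.isTree.mem_support_of_adj_of_adj hB hB' hne (q.append q')) with hA | hA
  · exact hbA (hq A hA)
  · exact hbA' (hq' A hA)

theorem eq_or_eq_or_eq_of_clawFree (hT : IsCliqueTree G T) (hcf : ClawFree G) {a : V}
    {A B₁ B₂ B₃ : MaxClique G} (ha : a ∈ A.1) (h₁ : T.Adj A B₁) (h₂ : T.Adj A B₂)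
    (h₃ : T.Adj A B₃) (ha₁ : a ∈ B₁.1) (ha₂ : a ∈ B₂.1) (ha₃ : a ∈ B₃.1) :
    B₁ = B₂ ∨ B₁ = B₃ ∨ B₂ = B₃ := by
  by_contra! ⟨n₁₂, n₁₃, n₂₃⟩
  obtain ⟨b₁, hb₁, hb₁A⟩ := MaxClique.exists_mem_notMem_of_ne h₁.ne'
  obtain ⟨b₂, hb₂, hb₂A⟩ := MaxClique.exists_mem_notMem_of_ne h₂.ne'
  obtain ⟨b₃, hb₃, hb₃A⟩ := MaxClique.exists_mem_notMem_of_ne h₃.ne'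
  have hb_ne : ∀ {B B' : MaxClique G} {b b' : V}, T.Adj A B → T.Adj A B' → B ≠ B' →
      b ∈ B.1 → b ∉ A.1 → b' ∈ B'.1 → b ≠ b' := fun hB hB' hBB' hb hbA hb' hbb' =>
    hbA (hT.inter_subset_of_adj_of_adj hB hB' hBB' ⟨hb, hbb' ▸ hb'⟩)
  have hadj : ∀ {B : MaxClique G} {b : V}, a ∈ B.1 → b ∈ B.1 → b ∉ A.1 → G.Adj a b :=
    fun {B _} haB hbB hbA => B.2.1 haB hbB fun hab => hbA (hab ▸ ha)
  rcases hcf.adj_of_adj (hadj ha₁ hb₁ hb₁A) (hadj ha₂ hb₂ hb₂A) (hadj ha₃ hb₃ hb₃A)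
    (hb_ne h₁ h₂ n₁₂ hb₁ hb₁A hb₂) (hb_ne h₁ h₃ n₁₃ hb₁ hb₁A hb₃)
    (hb_ne h₂ h₃ n₂₃ hb₂ hb₂A hb₃) with h | h | h
  · exact hT.not_adj_of_adj_of_adj h₁ h₂ n₁₂ hb₁ hb₁A hb₂ hb₂A h
  · exact hT.not_adj_of_adj_of_adj h₁ h₃ n₁₃ hb₁ hb₁A hb₃ hb₃A h
  · exact hT.not_adj_of_adj_of_adj h₂ h₃ n₂₃ hb₂ hb₂A hb₃ hb₃A h

theorem exists_adj_inter_subset (hT : IsCliqueTree G T) {A B : MaxClique G} (hne : A ≠ B) :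
    ∃ D, T.Adj A D ∧ A.1 ∩ B.1 ⊆ D.1 := by
  classical
  obtain ⟨p, hp⟩ := (hT.isTree.connected.preconnected A B).some.toPath
  obtain ⟨D, hAD, q, rfl⟩ := Walk.exists_eq_cons_of_ne hne p
  exact ⟨D, hAD, fun x ⟨hxA, hxB⟩ =>
    hT.mem_of_mem_support_of_isPath hp hxA hxB (by simp)⟩

end IsCliqueTree

theorem maxClique_spanned_by_triple_general {V : Type*} [Nonempty V]
    (G : SimpleGraph V) (hcf : ClawFree G)
    (hT : ∃ T : SimpleGraph (MaxClique G), IsCliqueTree G T)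
    (A : Set V) (hA : IsMaximalClique G A) :
    ∃ u v w : V, u ∈ A ∧ v ∈ A ∧ w ∈ A ∧
      ∀ B : Set V, IsMaximalClique G B → u ∈ B → v ∈ B → w ∈ B → B = A := by
  obtain ⟨T, hT⟩ := hT
  let Â : MaxClique G := ⟨A, hA⟩
  obtain ⟨u, hu⟩ := hA.nonempty
  obtain ⟨v, hv, w, hw, hvw⟩ := exists_pair_forall_notMem_or_notMem ⟨u, hu⟩ Subtype.val
    (N := {B | T.Adj Â B ∧ u ∈ B.1})
    (fun _ h₁ _ h₂ _ h₃ => hT.eq_or_eq_or_eq_of_clawFree hcf hu h₁.1 h₂.1 h₃.1 h₁.2 h₂.2 h₃.2)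
    (fun _ hB => MaxClique.exists_mem_notMem_of_ne hB.1.ne)
  refine ⟨u, v, w, hu, hv, hw, fun B hB huB hvB hwB => ?_⟩
  by_contra hne
  obtain ⟨D, hÂD, hD⟩ := hT.exists_adj_inter_subset (A := Â) (B := ⟨B, hB⟩)
    fun h => hne (congrArg Subtype.val h).symm
  rcases hvw D ⟨hÂD, hD ⟨hu, huB⟩⟩ with hvD | hwD
  · exact hvD (hD ⟨hv, hvB⟩)
  · exact hwD (hD ⟨hw, hwB⟩)

/-- Let `G` be a chordal claw-free graph that admits a clique
tree.  Then every max clique `A` of `G` is spanned by a triple of vertices: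
there exist `u, v, w ∈ A` such that `A` is the only max clique of `G`
containing all of `u`, `v` and `w`. -/
theorem maxClique_spanned_by_triple {V : Type*} [Fintype V] [Nonempty V]
    (G : SimpleGraph V) (hch : IsChordal G) (hcf : ClawFree G)
    (hT : ∃ T : SimpleGraph (MaxClique G), IsCliqueTree G T)
    (A : Set V) (hA : IsMaximalClique G A) :
    ∃ u v w : V, u ∈ A ∧ v ∈ A ∧ w ∈ A ∧
      ∀ B : Set V, IsMaximalClique G B → u ∈ B → v ∈ B → w ∈ B → B = A :=
  maxClique_spanned_by_triple_general G hcf hT A hA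
end

section
/- Let G = (V,E) be a chordal claw-free graph and let (v_1, v_2, v_3) ∈ V^3. Then (v_1, v_2, v_3) is a spanning triple of G if and only if {v_1, v_2, v_3} is a clique and every two distinct common neighbors w_1, w_2 of v_1, v_2, and v_3 are adjacent in G. -/
open SimpleGraph

lemma exists_maximalClique_superset {V : Type*} [Fintype V] (G : SimpleGraph V)
    {S : Set V} (hS : G.IsClique S) :
    ∃ A : Set V, IsMaximalClique G A ∧ S ⊆ A := by
  obtain ⟨A, ⟨hAcl, hSA⟩, hmax⟩ :=
    Set.Finite.exists_maximalFor id {t : Set V | G.IsClique t ∧ S ⊆ t}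
      (Set.toFinite _) ⟨S, hS, subset_rfl⟩
  exact ⟨A, ⟨hAcl, fun t ht hst => hst.antisymm (hmax ⟨ht, hSA.trans hst⟩ hst)⟩, hSA⟩

/-- Let `G` be a chordal claw-free graph and
`(v₁, v₂, v₃) ∈ V³`.  Then `(v₁, v₂, v₃)` is a spanning triple of `G` iff
`{v₁, v₂, v₃}` is a clique and every two distinct common neighbors of
`v₁, v₂, v₃` are adjacent in `G`. -/
theorem spanningTriple_characterization {V : Type*} [Fintype V] [Nonempty V]
    (G : SimpleGraph V) (hch : IsChordal G) (hcf : ClawFree G)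
    (v₁ v₂ v₃ : V) :
    (∃ A : Set V, Spans G v₁ v₂ v₃ A) ↔
      (G.IsClique {v₁, v₂, v₃} ∧
        ∀ w₁ w₂ : V, w₁ ≠ w₂ →
          G.Adj w₁ v₁ → G.Adj w₁ v₂ → G.Adj w₁ v₃ →
          G.Adj w₂ v₁ → G.Adj w₂ v₂ → G.Adj w₂ v₃ → G.Adj w₁ w₂) := by
  constructor
  · rintro ⟨A, ⟨hAc, _⟩, h1, h2, h3, huniq⟩
    refine ⟨?_, ?_⟩
    · intro x hx y hy hxy
      exact hAc (by rcases hx with rfl|rfl|rfl <;> assumption)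
        (by rcases hy with rfl|rfl|rfl <;> assumption) hxy
    · intro w₁ w₂ hne a1 a2 a3 b1 b2 b3
      -- each wᵢ with {v₁,v₂,v₃} forms a clique; extend to max clique; uniqueness forces wᵢ ∈ A
      have key : ∀ w : V, G.Adj w v₁ → G.Adj w v₂ → G.Adj w v₃ → w ∈ A := by
        intro w c1 c2 c3
        have hcl : G.IsClique (insert w {v₁, v₂, v₃}) := by
          intro x hx y hy hxy
          rcases hx with rfl|hx <;> rcases hy with rfl|hy
          · exact absurd rfl hxy
          · rcases hy with rfl|rfl|rfl <;> assumption
          · rcases hx with rfl|rfl|rfl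
            · exact c1.symm
            · exact c2.symm
            · exact c3.symm
          · exact hAc (by rcases hx with rfl|rfl|rfl <;> assumption)
              (by rcases hy with rfl|rfl|rfl <;> assumption) hxy
        obtain ⟨B, hB, hsub⟩ := exists_maximalClique_superset G hcl
        have hBA : B = A := huniq B hB (hsub (by simp)) (hsub (by simp)) (hsub (by simp))
        exact hBA ▸ hsub (by simp)
      exact hAc (key w₁ a1 a2 a3) (key w₂ b1 b2 b3) hne
  · rintro ⟨hclq, hcn⟩
    -- S = {v₁,v₂,v₃} ∪ common neighbors is a clique
    set S : Set V := {v₁, v₂, v₃} ∪ {w | G.Adj w v₁ ∧ G.Adj w v₂ ∧ G.Adj w v₃} with hS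
    have hSclique : G.IsClique S := by
      intro x hx y hy hxy
      rcases hx with hx|hx <;> rcases hy with hy|hy
      · exact hclq hx hy hxy
      · rcases hx with rfl|rfl|rfl
        · exact hy.1.symm
        · exact hy.2.1.symm
        · exact hy.2.2.symm
      · rcases hy with rfl|rfl|rfl
        · exact hx.1
        · exact hx.2.1
        · exact hx.2.2
      · exact hcn x y hxy hx.1 hx.2.1 hx.2.2 hy.1 hy.2.1 hy.2.2
    -- extend S to a maximal clique
    obtain ⟨A, hAmax, hSA⟩ := exists_maximalClique_superset G hSclique
    have hAcl := hAmax.1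
    have hv1 : v₁ ∈ A := hSA (Or.inl (by simp))
    have hv2 : v₂ ∈ A := hSA (Or.inl (by simp))
    have hv3 : v₃ ∈ A := hSA (Or.inl (by simp))
    refine ⟨A, hAmax, hv1, hv2, hv3, ?_⟩
    rintro B ⟨hBcl, hBmax⟩ hb1 hb2 hb3
    have hBS : B ⊆ S := by
      intro w hw
      by_cases hwv : w ∈ ({v₁, v₂, v₃} : Set V)
      · exact Or.inl hwv
      · simp only [Set.mem_insert_iff, Set.mem_singleton_iff, not_or] at hwv
        exact Or.inr ⟨hBcl hw hb1 hwv.1, hBcl hw hb2 hwv.2.1, hBcl hw hb3 hwv.2.2⟩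
    exact hBmax A hAcl (hBS.trans hSA)
end

section
/- Let G = (V,E) be a chordal claw-free graph, let A be a max clique of G, and suppose the triple (v_1, v_2, v_3) ∈ V^3 spans A. Then for every vertex w ∈ V, we have w ∈ A if and only if w ∈ {v_1, v_2, v_3} or w is adjacent to v_j for all j ∈ {1,2,3}. -/
open SimpleGraph

theorem SimpleGraph.IsClique.exists_isMaximalClique_superset {V : Type*} {G : SimpleGraph V}
    {s : Set V} (hs : G.IsClique s) : ∃ t : Set V, IsMaximalClique G t ∧ s ⊆ t := by
  obtain ⟨m, hsm, hm⟩ := zorn_subset_nonempty {t : Set V | G.IsClique t ∧ s ⊆ t}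
    (fun c hc hchain ⟨t, ht⟩ =>
      ⟨⋃₀ c,
        ⟨(isClique_sUnion hchain.directedOn).2 fun u hu => (hc hu).1,
          (hc ht).2.trans (Set.subset_sUnion_of_mem ht)⟩,
        fun _ => Set.subset_sUnion_of_mem⟩)
    s ⟨hs, subset_rfl⟩
  exact ⟨m, ⟨hm.prop.1, fun t ht hmt => hm.eq_of_subset ⟨ht, hsm.trans hmt⟩ hmt⟩, hsm⟩

theorem Spans.subset_of_isClique {V : Type*} {G : SimpleGraph V} {v₁ v₂ v₃ : V} {A s : Set V}
    (hspan : Spans G v₁ v₂ v₃ A) (hs : G.IsClique s) (h₁ : v₁ ∈ s) (h₂ : v₂ ∈ s)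
    (h₃ : v₃ ∈ s) : s ⊆ A := by
  obtain ⟨t, ht, hst⟩ := hs.exists_isMaximalClique_superset
  exact hspan.2.2.2.2 t ht (hst h₁) (hst h₂) (hst h₃) ▸ hst

theorem mem_spanned_maxClique_iff_general {V : Type*}
    (G : SimpleGraph V)
    (A : Set V) (v₁ v₂ v₃ : V) (hspan : Spans G v₁ v₂ v₃ A) (w : V) :
    w ∈ A ↔ (w = v₁ ∨ w = v₂ ∨ w = v₃) ∨
      (G.Adj w v₁ ∧ G.Adj w v₂ ∧ G.Adj w v₃) := by
  obtain ⟨⟨hA, -⟩, h₁, h₂, h₃, -⟩ := id hspan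
  constructor
  · refine fun hw => or_iff_not_imp_left.2 fun hv => ?_
    simp only [not_or] at hv
    exact ⟨hA hw h₁ hv.1, hA hw h₂ hv.2.1, hA hw h₃ hv.2.2⟩
  · rintro ((rfl | rfl | rfl) | ⟨a₁, a₂, a₃⟩)
    · exact h₁
    · exact h₂
    · exact h₃
    have hclique : G.IsClique ({w, v₁, v₂, v₃} : Set V) := by
      refine isClique_insert.2 ⟨hA.subset ?_, ?_⟩
      · simp [Set.insert_subset_iff, h₁, h₂, h₃]
      · rintro b (rfl | rfl | rfl) - <;> assumption
    exact hspan.subset_of_isClique hclique (by simp) (by simp) (by simp) (by simp)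

/-- Let `G` be a chordal claw-free graph, `A` a max clique of
`G` spanned by the triple `(v₁, v₂, v₃)`.  Then for every vertex `w`, we have
`w ∈ A` iff `w ∈ {v₁, v₂, v₃}` or `w` is adjacent to each of `v₁, v₂, v₃`. -/
theorem mem_spanned_maxClique_iff {V : Type*} [Fintype V] [Nonempty V]
    (G : SimpleGraph V) (hch : IsChordal G) (hcf : ClawFree G)
    (A : Set V) (v₁ v₂ v₃ : V) (hspan : Spans G v₁ v₂ v₃ A) (w : V) :
    w ∈ A ↔ (w = v₁ ∨ w = v₂ ∨ w = v₃) ∨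
      (G.Adj w v₁ ∧ G.Adj w v₂ ∧ G.Adj w v₃) :=
  mem_spanned_maxClique_iff_general G A v₁ v₂ v₃ hspan w
end
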